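/- Let m = s + t with s ≤ t and let φ: F_2^s → F_2^t be injective. Then the Maiorana-McFarland function f(y,x) = φ(y)·x + τ(y) on F_2^s × F_2^t satisfies W_f(β,α) ∈ {0, ±2^t} for all (β,α) in F_2^s × F_2^t, i.e., f is plateaued with amplitude 2^t. -/
import Mathlib


open Finset

/-- mod-2 inner product on `F_2^n`. -/
def dotp {n : ℕ} (a b : Fin n → ZMod 2) : ZMod 2 := ∑ i, a i * b i

/-- `(-1)^v` for `v ∈ F_2`. -/
def sgn (v : ZMod 2) : ℤ := (-1 : ℤ) ^ v.val

/-- Walsh-Hadamard transform of a Boolean function on `F_2^n`. -/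
def walsh {n : ℕ} (f : (Fin n → ZMod 2) → ZMod 2) (w : Fin n → ZMod 2) : ℤ :=
  ∑ x : Fin n → ZMod 2, sgn (f x + dotp w x)

/-- Integer inner product of the ±1-sequences of two Boolean functions. -/
def seqInner {n : ℕ} (f g : (Fin n → ZMod 2) → ZMod 2) : ℤ :=
  ∑ x : Fin n → ZMod 2, sgn (f x) * sgn (g x)

/-- Walsh transform of a function on a product domain F_2^s × F_2^t. -/
def walshP {s t : ℕ} (f : (Fin s → ZMod 2) × (Fin t → ZMod 2) → ZMod 2)
    (β : Fin s → ZMod 2) (α : Fin t → ZMod 2) : ℤ :=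
  ∑ p : (Fin s → ZMod 2) × (Fin t → ZMod 2), sgn (f p + dotp β p.1 + dotp α p.2)

lemma sgn_add (u v : ZMod 2) : sgn (u + v) = sgn u * sgn v := by
  revert u v; decide

lemma dotp_add_left {n : ℕ} (a b x : Fin n → ZMod 2) :
    dotp (a + b) x = dotp a x + dotp b x := by
  simp [dotp, add_mul, Finset.sum_add_distrib]

lemma sum_sgn_dotp {n : ℕ} (c : Fin n → ZMod 2) :
    ∑ x : Fin n → ZMod 2, sgn (dotp c x) = if c = 0 then 2 ^ n else 0 := by
  by_cases hc : c = 0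
  · subst hc
    simp [dotp, sgn, Finset.card_univ]
  · simp only [hc, if_false]
    obtain ⟨i, hi⟩ := Function.ne_iff.mp hc
    simp only [Pi.zero_apply] at hi
    have hci : c i = 1 := by
      have h1 : ∀ v : ZMod 2, v ≠ 0 → v = 1 := by decide
      exact h1 _ hi
    -- involution x ↦ x + single i 1
    have key : ∀ x : Fin n → ZMod 2,
        dotp c (x + Pi.single i 1) = dotp c x + 1 := by
      intro x
      simp only [dotp, Pi.add_apply, mul_add, Finset.sum_add_distrib]
      congr 1
      rw [Finset.sum_eq_single i]
      · simp [hci]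
      · intro j _ hj; simp [Pi.single_eq_of_ne hj]
      · simp
    have h2v : ∀ v : ZMod 2, v + v = 0 := by decide
    have hσ : Function.Involutive (fun x : Fin n → ZMod 2 => x + Pi.single i 1) := by
      intro x
      funext j
      simp only [Pi.add_apply]
      rw [add_assoc, h2v, add_zero]
    have := Equiv.sum_comp hσ.toPerm (fun x => sgn (dotp c x))
    have h2 : ∑ x : Fin n → ZMod 2, sgn (dotp c (x + Pi.single i 1))
        = ∑ x : Fin n → ZMod 2, sgn (dotp c x) := this
    have h3 : ∑ x : Fin n → ZMod 2, sgn (dotp c (x + Pi.single i 1))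
        = -∑ x : Fin n → ZMod 2, sgn (dotp c x) := by
      rw [← Finset.sum_neg_distrib]
      refine Finset.sum_congr rfl fun x _ => ?_
      rw [key x, sgn_add]
      have : sgn 1 = -1 := by decide
      rw [this]; ring
    rw [h2] at h3
    linarith

lemma sgn_cases (v : ZMod 2) : sgn v = 1 ∨ sgn v = -1 := by revert v; decide

lemma F2addzero {n : ℕ} {a b : Fin n → ZMod 2} : a + b = 0 ↔ a = b := by
  constructor
  · intro h
    funext j
    have hj := congrFun h j
    have h1 : ∀ u v : ZMod 2, u + v = 0 → u = v := by decide
    exact h1 _ _ hj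
  · rintro rfl
    funext j
    have h2 : ∀ v : ZMod 2, v + v = 0 := by decide
    exact h2 _

/-- a Maiorana-McFarland function φ(y)·x + τ(y) with φ injective
and s ≤ t is plateaued with amplitude 2^t. -/
theorem stmt_4 {m s t : ℕ} (hm : m = s + t) (hst : s ≤ t)
    (φ : (Fin s → ZMod 2) → (Fin t → ZMod 2)) (hφ : Function.Injective φ)
    (τ : (Fin s → ZMod 2) → ZMod 2)
    (β : Fin s → ZMod 2) (α : Fin t → ZMod 2) :
    walshP (fun p => dotp (φ p.1) p.2 + τ p.1) β α ∈
      ({0, 2 ^ t, -(2 ^ t)} : Set ℤ) := by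
  have hrw : walshP (fun p => dotp (φ p.1) p.2 + τ p.1) β α
      = ∑ y : Fin s → ZMod 2, if φ y + α = 0 then sgn (τ y + dotp β y) * 2 ^ t else 0 := by
    rw [walshP, Fintype.sum_prod_type]
    refine Finset.sum_congr rfl fun y _ => ?_
    have : ∀ x : Fin t → ZMod 2,
        sgn (dotp (φ y) x + τ y + dotp β y + dotp α x)
        = sgn (τ y + dotp β y) * sgn (dotp (φ y + α) x) := by
      intro x
      rw [dotp_add_left]
      have : dotp (φ y) x + τ y + dotp β y + dotp α x
          = (τ y + dotp β y) + (dotp (φ y) x + dotp α x) := by ring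
      rw [this, sgn_add]
    simp only [this, ← Finset.mul_sum, sum_sgn_dotp]
    split <;> simp
  rw [hrw]
  by_cases hex : ∃ y, φ y = α
  · obtain ⟨y₀, hy₀⟩ := hex
    have hsum : (∑ y : Fin s → ZMod 2,
        if φ y + α = 0 then sgn (τ y + dotp β y) * 2 ^ t else 0)
        = sgn (τ y₀ + dotp β y₀) * 2 ^ t := by
      rw [Finset.sum_eq_single y₀]
      · have : φ y₀ + α = 0 := by rw [hy₀]; exact F2addzero.mpr rfl
        simp [this]
      · intro y _ hy
        have : φ y + α ≠ 0 := by
          intro h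
          apply hy
          apply hφ
          rw [hy₀]
          exact F2addzero.mp h
        simp [this]
      · simp
    rw [hsum]
    rcases sgn_cases (τ y₀ + dotp β y₀) with h | h <;> rw [h] <;> simp
  · have : ∀ y, φ y + α ≠ 0 := by
      intro y h
      exact hex ⟨y, F2addzero.mp h⟩
    simp [this]
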